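/- Variable Normal Form: there is a constant C such that for every PETS(Ax) derivation 𝒟 of an equation t = u there exists a derivation 𝒟′ of t = u in Variable Normal Form with lh(𝒟′) ≤ C · lh(𝒟)², where Variable Normal Form means: (1) every application of the Axiom rule concludes an injective renaming of an equation in Ax (so its left-hand side is f(t⃗) with each tᵢ a generalized variable and no variable shared between distinct tᵢ); (2) every variable occurring in the derivation either occurs in the final equation or is bound by exactly one application of the Substitution rule. -/

import Mathlib

namespace PETS

/-! ## Approximate values -/

/-- The set `𝔻` of approximate values: binary strings plus `*` (unknown). -/
inductive D where
  | eps  : D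
  | b0   : D → D
  | b1   : D → D
  | star : D
deriving DecidableEq

instance : Zero D := ⟨D.star⟩

/-- The approximation relation `⊑` on `𝔻`. -/
inductive Approx : D → D → Prop where
  | star (v : D) : Approx .star v
  | eps : Approx .eps .eps
  | b0 {v w : D} : Approx v w → Approx (.b0 v) (.b0 w)
  | b1 {v w : D} : Approx v w → Approx (.b1 v) (.b1 w)

/-- Componentwise extension of `⊑` to tuples. -/
def TApprox {n : ℕ} (u v : Fin n → D) : Prop := ∀ i, Approx (u i) (v i)

/-- Compatibility `u △ v`. -/
def Compat (u v : D) : Prop := Approx u v ∨ Approx v u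

/-- Componentwise compatibility of tuples. -/
def TCompat {n : ℕ} (u v : Fin n → D) : Prop := ∀ i, Compat (u i) (v i)

/-- The gauge `G(v)` of an approximate value. -/
def D.gauge : D → ℕ
  | .eps => 1
  | .star => 1
  | .b0 v => v.gauge + 1
  | .b1 v => v.gauge + 1

/-- The gauge of a tuple of approximate values. -/
def tupGauge {n : ℕ} (v : Fin n → D) : ℕ := Finset.univ.sup fun i => (v i).gauge

open Classical in
/-- `maxapprx S`: the `⊑`-greatest element of `S` if it exists, else `*`.
In particular `maxapprx ∅ = *`. -/
noncomputable def maxapprx (S : Set D) : D :=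
  if h : ∃ m, m ∈ S ∧ ∀ v ∈ S, Approx v m then h.choose else D.star

/-! ## Generators and consistent sets -/

/-- A finite set of (potential) generators for `𝔻^n → 𝔻`. -/
abbrev Gens (n : ℕ) := Finset ((Fin n → D) × D)

/-- `f` is a consistent set of generators for `𝔻^n → 𝔻`:
all values are `≠ *` and compatible arguments have compatible values. -/
def ConsistentGens {n : ℕ} (f : Gens n) : Prop :=
  (∀ p ∈ f, p.2 ≠ D.star) ∧
  ∀ p ∈ f, ∀ q ∈ f, TCompat p.1 q.1 → Compat p.2 q.2

/-- `f[x] = { v | ∃ w ⊑ x, (w ↦ v) ∈ f }`. -/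
def gensAt {n : ℕ} (f : Gens n) (x : Fin n → D) : Set D :=
  {v | ∃ w : Fin n → D, TApprox w x ∧ (w, v) ∈ f}

/-- The finitely generated map `f(x) = maxapprx f[x]`. -/
noncomputable def applyGens {n : ℕ} (f : Gens n) (x : Fin n → D) : D :=
  maxapprx (gensAt f x)

/-! ## Terms -/

/-- Terms over the language: variables, the basic symbols `ε`, `s₀`, `s₁`, and
countably many non-basic function symbols `op k` of each arity `a`
(a non-basic symbol is identified by the pair `(k, a)`). -/
inductive Tm where
  | var : ℕ → Tm
  | eps : Tm
  | s0 : Tm → Tm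
  | s1 : Tm → Tm
  | app : (k : ℕ) → (a : ℕ) → (Fin a → Tm) → Tm

/-- The length (number of symbols) of a term. -/
def Tm.lh : Tm → ℕ
  | .var _ => 1
  | .eps => 1
  | .s0 t => t.lh + 1
  | .s1 t => t.lh + 1
  | .app _ a args => (Finset.univ.sum fun i : Fin a => (args i).lh) + 1

/-- The set of variables occurring in a term. -/
def Tm.vars : Tm → Finset ℕ
  | .var x => {x}
  | .eps => ∅
  | .s0 t => t.vars
  | .s1 t => t.vars
  | .app _ a args => Finset.univ.biUnion fun i : Fin a => (args i).vars

/-- Substitution `t[u/x]` of the term `u` for the variable `x` in `t`. -/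
def Tm.subst (t : Tm) (x : ℕ) (u : Tm) : Tm :=
  match t with
  | .var y => if y = x then u else .var y
  | .eps => .eps
  | .s0 s => .s0 (s.subst x u)
  | .s1 s => .s1 (s.subst x u)
  | .app k a args => .app k a fun i => (args i).subst x u

/-- Simultaneous substitution of terms for all variables. -/
def Tm.msubst (σ : ℕ → Tm) : Tm → Tm
  | .var x => σ x
  | .eps => .eps
  | .s0 t => .s0 (t.msubst σ)
  | .s1 t => .s1 (t.msubst σ)
  | .app k a args => .app k a fun i => (args i).msubst σ

/-! ## Frames and assignments -/

/-- An entry of a frame: a non-basic symbol `(k, a)` together with a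
generator `(arg, out)` for `𝔻^a → 𝔻`. -/
abbrev Entry := Σ _k : ℕ, Σ a : ℕ, (Fin a → D) × D

/-- A frame: a finite set of entries, i.e. a finite partial map from
non-basic function symbols to finite sets of generators. -/
abbrev Frame := Finset Entry

/-- `F(f)[x]` for the symbol `f = (k, a)`:
the set `{ v | ∃ w ⊑ x, (w ↦ v) ∈ F(f) }`. -/
def Frame.setAt (F : Frame) (k a : ℕ) (x : Fin a → D) : Set D :=
  {v | ∃ w : Fin a → D, TApprox w x ∧ (⟨k, a, (w, v)⟩ : Entry) ∈ F}

/-- The evaluation `F(f)(x)` of the finitely generated map of the non-basic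
symbol `f = (k, a)` in the frame `F`. -/
noncomputable def Frame.app (F : Frame) (k a : ℕ) (x : Fin a → D) : D :=
  maxapprx (F.setAt k a x)

/-- The gauge of a frame entry. -/
def Entry.gauge (e : Entry) : ℕ := max (tupGauge e.2.2.1) e.2.2.2.gauge

/-- The gauge `G(F)` of a frame. -/
def Frame.gauge (F : Frame) : ℕ := F.sup Entry.gauge

/-- A frame is consistent if each of its sections is a consistent set of
generators (values `≠ *`, compatible arguments have compatible values). -/
def Frame.Consistent (F : Frame) : Prop :=
  (∀ (k a : ℕ) (w : Fin a → D) (v : D), (⟨k, a, (w, v)⟩ : Entry) ∈ F → v ≠ D.star) ∧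
  (∀ (k a : ℕ) (w w' : Fin a → D) (v v' : D),
    (⟨k, a, (w, v)⟩ : Entry) ∈ F → (⟨k, a, (w', v')⟩ : Entry) ∈ F →
    TCompat w w' → Compat v v')

/-- An assignment: a finitely supported map from variables to `𝔻`
(where the zero of `𝔻` is `*`, i.e. `ρ(x) = *` outside the domain). -/
abbrev Assignment := ℕ →₀ D

/-- The gauge `G(ρ)` of an assignment. -/
noncomputable def Assignment.gauge (ρ : Assignment) : ℕ :=
  ρ.support.sup fun x => (ρ x).gauge

/-- The evaluation `⟦t⟧_{F,ρ}` of a term under a frame and an assignment: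
basic symbols are evaluated as themselves, non-basic symbols via their
finitely generated maps. -/
noncomputable def eval (F : Frame) (ρ : Assignment) : Tm → D
  | .var x => ρ x
  | .eps => D.eps
  | .s0 t => D.b0 (eval F ρ t)
  | .s1 t => D.b1 (eval F ρ t)
  | .app k a args => F.app k a fun i => eval F ρ (args i)

/-! ## Nice axiom systems -/

/-- A generalized variable: a variable, `ε`, `s₀(x)` or `s₁(x)`. -/
inductive GVar where
  | var : ℕ → GVar
  | eps : GVar
  | s0 : ℕ → GVar
  | s1 : ℕ → GVar
deriving DecidableEq

/-- The term denoted by a generalized variable. -/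
def GVar.toTm : GVar → Tm
  | .var x => .var x
  | .eps => .eps
  | .s0 x => .s0 (.var x)
  | .s1 x => .s1 (.var x)

/-- The variables of a generalized variable. -/
def GVar.vars : GVar → Finset ℕ
  | .var x => {x}
  | .eps => ∅
  | .s0 x => {x}
  | .s1 x => {x}

/-- Applying an assignment to a generalized variable,
e.g. `ρ(sᵢ(x)) = sᵢ(ρ(x))`. -/
def GVar.evalA (ρ : Assignment) : GVar → D
  | .var x => ρ x
  | .eps => D.eps
  | .s0 x => D.b0 (ρ x)
  | .s1 x => D.b1 (ρ x)

/-- Unifiability of two generalized variables (they have a common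
substitution instance). -/
def GVar.unif : GVar → GVar → Prop
  | .var _, _ => True
  | _, .var _ => True
  | .eps, .eps => True
  | .s0 _, .s0 _ => True
  | .s1 _, .s1 _ => True
  | _, _ => False

/-- An axiom: an equation `f(t₁,…,tₐ) = rhs` where `f` is the non-basic
symbol `(k, a)` and each `tᵢ` is a generalized variable. -/
structure Axm where
  k : ℕ
  a : ℕ
  args : Fin a → GVar
  rhs : Tm

/-- The left-hand side term `f(t₁,…,tₐ)` of an axiom. -/
def Axm.lhs (A : Axm) : Tm := .app A.k A.a fun i => (A.args i).toTm

/-- The variables of the left-hand side of an axiom. -/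
def Axm.lhsVars (A : Axm) : Finset ℕ := Finset.univ.biUnion fun i => (A.args i).vars

/-- All variables of an axiom. -/
def Axm.vars (A : Axm) : Finset ℕ := A.lhsVars ∪ A.rhs.vars

/-- A nice set of axioms: each axiom has the form `f(x⃗) = t`, `f(ε,x⃗) = t`,
`f(x0,x⃗) = t` or `f(x1,x⃗) = t` (so all arguments beyond the first are plain
variables), the variables on the left are pairwise distinct, the right-hand
side variables occur on the left, and no left-hand side occurs twice among
the axioms, also modulo substitution. -/
structure NiceAxioms (Ax : Set Axm) : Prop where
  shape : ∀ A ∈ Ax, ∀ i : Fin A.a, 0 < (i : ℕ) → ∃ x, A.args i = GVar.var x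
  distinct : ∀ A ∈ Ax, ∀ i j : Fin A.a, i ≠ j → Disjoint ((A.args i).vars) ((A.args j).vars)
  rhsVars : ∀ A ∈ Ax, A.rhs.vars ⊆ A.lhsVars
  unique : ∀ A ∈ Ax, ∀ B ∈ Ax, A.k = B.k → ∀ h : A.a = B.a,
    (∀ i : Fin A.a, GVar.unif (A.args i) (B.args (Fin.cast h i))) → A = B

/-! ## Derivations in PETS(Ax) -/

/-- Derivations of the pure equational theory with substitution `PETS(Ax)`:
`Deriv Ax t u` is the type of derivations ending in the equation `t = u`. -/
inductive Deriv (Ax : Set Axm) : Tm → Tm → Type where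
  | ax (A : Axm) (hA : A ∈ Ax) (σ : ℕ → Tm) :
      Deriv Ax (A.lhs.msubst σ) (A.rhs.msubst σ)
  | refl (t : Tm) : Deriv Ax t t
  | symm {t u : Tm} (d : Deriv Ax u t) : Deriv Ax t u
  | trans {t s u : Tm} (d₁ : Deriv Ax t s) (d₂ : Deriv Ax s u) : Deriv Ax t u
  | compat {t u : Tm} (s : Tm) (x : ℕ) (d : Deriv Ax t u) :
      Deriv Ax (s.subst x t) (s.subst x u)
  | subst {t u : Tm} (s : Tm) (x : ℕ) (d : Deriv Ax t u) :
      Deriv Ax (t.subst x s) (u.subst x s)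

namespace Deriv

variable {Ax : Set Axm}

/-- The length `lh(𝒟)` of a derivation: the sum of the lengths of the
equations occurring in it plus the length of the additional syntax
identifying rule applications. -/
def lh : {a b : Tm} → Deriv Ax a b → ℕ
  | _, _, .ax A _ σ => (A.lhs.msubst σ).lh + (A.rhs.msubst σ).lh + 1
  | _, _, .refl t => t.lh + t.lh + 1
  | a, b, .symm d => d.lh + (a.lh + b.lh + 1)
  | a, b, .trans d₁ d₂ => d₁.lh + d₂.lh + (a.lh + b.lh + 1)
  | _, _, @Deriv.compat _ t u s x d =>
      d.lh + ((s.subst x t).lh + (s.subst x u).lh + 1) + (s.lh + 1 + 1)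
  | _, _, @Deriv.subst _ t u s x d =>
      d.lh + ((t.subst x s).lh + (u.subst x s).lh + 1)
        + (t.lh + s.lh + 1 + u.lh + s.lh + 1 + 2)

/-- The set of variables occurring in a derivation. -/
def varsOf : {a b : Tm} → Deriv Ax a b → Finset ℕ
  | _, _, .ax A _ σ => (A.lhs.msubst σ).vars ∪ (A.rhs.msubst σ).vars
  | _, _, .refl t => t.vars
  | _, _, .symm d => d.varsOf
  | _, _, .trans d₁ d₂ => d₁.varsOf ∪ d₂.varsOf
  | _, _, @Deriv.compat _ _ _ s x d => d.varsOf ∪ s.vars ∪ {x}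
  | _, _, @Deriv.subst _ _ _ s x d => d.varsOf ∪ s.vars ∪ {x}

/-- The list (with multiplicities) of variables of a derivation bound by
applications of the Substitution rule. -/
def bvars : {a b : Tm} → Deriv Ax a b → List ℕ
  | _, _, .ax _ _ _ => []
  | _, _, .refl _ => []
  | _, _, .symm d => d.bvars
  | _, _, .trans d₁ d₂ => d₁.bvars ++ d₂.bvars
  | _, _, .compat _ _ d => d.bvars
  | _, _, @Deriv.subst _ _ _ _ x d => x :: d.bvars

/-- The set of axioms of `Ax` occurring (i.e. used by an Axiom rule) in a
derivation. -/
def axiomsUsed : {a b : Tm} → Deriv Ax a b → Set Axm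
  | _, _, .ax A _ _ => {A}
  | _, _, .refl _ => ∅
  | _, _, .symm d => d.axiomsUsed
  | _, _, .trans d₁ d₂ => d₁.axiomsUsed ∪ d₂.axiomsUsed
  | _, _, .compat _ _ d => d.axiomsUsed
  | _, _, .subst _ _ d => d.axiomsUsed

/-- A substitution is an injective renaming of the variables of an axiom. -/
def InjRenaming (A : Axm) (σ : ℕ → Tm) : Prop :=
  (∀ x ∈ A.vars, ∃ y, σ x = Tm.var y) ∧ Set.InjOn σ ↑A.vars

/-- Condition (1) of Variable Normal Form: every application of the Axiom
rule is an injective renaming of an axiom. -/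
def VNFax : {a b : Tm} → Deriv Ax a b → Prop
  | _, _, .ax A _ σ => InjRenaming A σ
  | _, _, .refl _ => True
  | _, _, .symm d => d.VNFax
  | _, _, .trans d₁ d₂ => d₁.VNFax ∧ d₂.VNFax
  | _, _, .compat _ _ d => d.VNFax
  | _, _, .subst _ _ d => d.VNFax

/-- Variable Normal Form: every Axiom rule application is an injective
renaming of an axiom in `Ax`, and every variable occurring in the derivation
either occurs in the final equation or is bound by exactly one application
of the Substitution rule. -/
def VNF {a b : Tm} (d : Deriv Ax a b) : Prop :=
  d.VNFax ∧ ∀ x ∈ d.varsOf, x ∈ a.vars ∪ b.vars ∨ d.bvars.count x = 1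

end Deriv

/-! ## Models, updates, update sequences -/

/-- `F` is a model of `Ax`: for every axiom `t = u` in `Ax` and every
assignment `ρ`, `⟦t⟧_{F,ρ} ⊑ ⟦u⟧_{F,ρ}`. -/
def IsModel (F : Frame) (Ax : Set Axm) : Prop :=
  ∀ A ∈ Ax, ∀ ρ : Assignment, Approx (eval F ρ A.lhs) (eval F ρ A.rhs)

/-- `F` is a `κ`-model of the derivation `d`: `F` is a frame (its sections
are consistent sets) with `G(F) ≤ κ`, and for every axiom `t = u` of `Ax`
occurring in `d` and every assignment `ρ` with `dom(ρ) ⊆ var(d)` and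
`G(ρ) ≤ κ`, we have `⟦t⟧_{F,ρ} ⊑ ⟦u⟧_{F,ρ}`. -/
def IsKModel {Ax : Set Axm} {a b : Tm} (F : Frame) (κ : ℕ) (d : Deriv Ax a b) : Prop :=
  F.Consistent ∧ F.gauge ≤ κ ∧
  ∀ A ∈ d.axiomsUsed, ∀ ρ : Assignment,
    ↑ρ.support ⊆ (↑d.varsOf : Set ℕ) → ρ.gauge ≤ κ →
    Approx (eval F ρ A.lhs) (eval F ρ A.rhs)

/-- An update `f : v⃗ ↦ w` for the non-basic symbol `f = (k, a)`. -/
structure Upd where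
  k : ℕ
  a : ℕ
  v : Fin a → D
  w : D

/-- The gauge `G(v⃗, w)` of an update. -/
def Upd.gauge (u : Upd) : ℕ := max (tupGauge u.v) u.w.gauge

/-- The frame entry corresponding to an update. -/
def Upd.entry (u : Upd) : Entry := ⟨u.k, u.a, (u.v, u.w)⟩

/-- `F * (f : v⃗ ↦ w)`: the frame `F` updated by the update. -/
noncomputable def Frame.apUpd (F : Frame) (u : Upd) : Frame := insert u.entry F

/-- `F * σ` for a sequence of updates `σ`. -/
noncomputable def Frame.apSeq (F : Frame) (σ : List Upd) : Frame :=
  σ.foldl Frame.apUpd F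

/-- `u` is an update based on `F`, `κ` and `d`: a generator `v⃗ ↦ w` with
`G(v⃗, w) ≤ κ` for a non-basic symbol `f`, obtained from an axiom
`f(t⃗) = u'` of `Ax` occurring in `d` and an assignment `ρ` by
`vᵢ = ρ(tᵢ)` and `w = ⟦u'⟧_{F,ρ}`. -/
def IsUpdate {Ax : Set Axm} {a b : Tm} (F : Frame) (κ : ℕ) (d : Deriv Ax a b)
    (u : Upd) : Prop :=
  u.w ≠ D.star ∧ u.gauge ≤ κ ∧
  ∃ A ∈ d.axiomsUsed, ∃ ρ : Assignment,
    u = ⟨A.k, A.a, fun i => (A.args i).evalA ρ, eval F ρ A.rhs⟩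

/-- `σ` is a sequence of updates based on `F`, `κ` and `d`: each update in
the sequence is an update based on the frame produced so far. -/
def IsUpdSeq {Ax : Set Axm} {a b : Tm} (κ : ℕ) (d : Deriv Ax a b) :
    Frame → List Upd → Prop
  | _, [] => True
  | F, u :: σ => IsUpdate F κ d u ∧ IsUpdSeq κ d (F.apUpd u) σ

/-- The gauge `G(σ)` of a sequence of updates. -/
def seqGauge (σ : List Upd) : ℕ := (σ.map Upd.gauge).foldr max 0

/-- The extent `E(σ)` of a sequence of updates (maximal arity used). -/
def seqExt (σ : List Upd) : ℕ := (σ.map Upd.a).foldr max 0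

/-! ## Instructions -/

/-- Instructions: `A[t→u]`, `A[t←u]` for axiom (instances) `t = u`, and
`S↑[t,s/x]`, `S↓[t,s/x]` for terms `t, s` and a variable `x`. -/
inductive Instr where
  | axF : Tm → Tm → Instr
  | axB : Tm → Tm → Instr
  | sUp : Tm → Tm → ℕ → Instr
  | sDown : Tm → Tm → ℕ → Instr

/-- The length of an instruction. -/
def Instr.lh : Instr → ℕ
  | .axF t u => t.lh + u.lh + 1
  | .axB t u => t.lh + u.lh + 1
  | .sUp t s _ => t.lh + s.lh + 1
  | .sDown t s _ => t.lh + s.lh + 1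

/-- The length of a sequence of instructions. -/
def instrsLh (τ : List Instr) : ℕ := (τ.map Instr.lh).sum

/-- An instruction is *for* the derivation `d` if its axiom instructions
carry (injective renamings of) axioms occurring in `d`. -/
def Instr.For {Ax : Set Axm} {a b : Tm} (d : Deriv Ax a b) : Instr → Prop
  | .axF t u => ∃ A ∈ d.axiomsUsed, ∃ σ : ℕ → Tm,
      Deriv.InjRenaming A σ ∧ t = A.lhs.msubst σ ∧ u = A.rhs.msubst σ
  | .axB t u => ∃ A ∈ d.axiomsUsed, ∃ σ : ℕ → Tm,
      Deriv.InjRenaming A σ ∧ t = A.lhs.msubst σ ∧ u = A.rhs.msubst σ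
  | .sUp _ _ _ => True
  | .sDown _ _ _ => True

/-- The instruction sequences `→Inst_𝒟` (first component) and `←Inst_𝒟`
(second component) extracted from a derivation. -/
def Deriv.insts {Ax : Set Axm} : {a b : Tm} → Deriv Ax a b → List Instr × List Instr
  | _, _, .ax A _ σ =>
      ([.axF (A.lhs.msubst σ) (A.rhs.msubst σ)],
       [.axB (A.lhs.msubst σ) (A.rhs.msubst σ)])
  | _, _, .refl _ => ([], [])
  | _, _, .symm d => (d.insts.2, d.insts.1)
  | _, _, .trans d₁ d₂ => (d₁.insts.1 ++ d₂.insts.1, d₂.insts.2 ++ d₁.insts.2)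
  | _, _, .compat _ _ d => d.insts
  | _, _, @Deriv.subst _ t u s x d =>
      (Instr.sUp t s x :: (d.insts.1 ++ [Instr.sDown u s x]),
       Instr.sUp u s x :: (d.insts.2 ++ [Instr.sDown t s x]))

/-- `Ψ(t ← u, ⟨F, ρ⟩)`: for `t` of the form `f(t⃗)`, the update `f : v⃗ ↦ w`
with `vᵢ = ρ(tᵢ)` and `w = ⟦u⟧_{F,ρ}`. -/
noncomputable def Psi (t u : Tm) (F : Frame) (ρ : Assignment) : Upd :=
  match t with
  | .app k a args => ⟨k, a, fun i => eval F ρ (args i), eval F ρ u⟩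
  | _ => ⟨0, 0, Fin.elim0, eval F ρ u⟩

/-- One step of the state transformer `Φ` (the frame `F` is the fixed base
frame; the state consists of the update sequence so far and the current
assignment). -/
noncomputable def PhiStep (F : Frame) (st : List Upd × Assignment) :
    Instr → List Upd × Assignment
  | .axF _ _ => st
  | .axB t u => (st.1 ++ [Psi t u (F.apSeq st.1) st.2], st.2)
  | .sUp _ s x => (st.1, Finsupp.update st.2 x (eval (F.apSeq st.1) st.2 s))
  | .sDown _ _ x => (st.1, st.2.erase x)

/-- The state transformer `Φ(τ, ⟨F, σ, ρ⟩) = ⟨F, σ', ρ'⟩`, processing the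
instruction sequence `τ` from left to right. -/
noncomputable def Phi (F : Frame) (τ : List Instr) (st : List Upd × Assignment) :
    List Upd × Assignment :=
  τ.foldl (PhiStep F) st

/-! ## Sub-derivations -/

/-- `SubDeriv e d`: `e` is a sub-derivation of `d`. -/
inductive SubDeriv {Ax : Set Axm} :
    {a b c d : Tm} → Deriv Ax a b → Deriv Ax c d → Prop where
  | refl {a b : Tm} (d : Deriv Ax a b) : SubDeriv d d
  | symm {a b t u : Tm} {e : Deriv Ax a b} {d : Deriv Ax u t} :
      SubDeriv e d → SubDeriv e (Deriv.symm d)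
  | transL {a b t s u : Tm} {e : Deriv Ax a b} {d₁ : Deriv Ax t s} {d₂ : Deriv Ax s u} :
      SubDeriv e d₁ → SubDeriv e (Deriv.trans d₁ d₂)
  | transR {a b t s u : Tm} {e : Deriv Ax a b} {d₁ : Deriv Ax t s} {d₂ : Deriv Ax s u} :
      SubDeriv e d₂ → SubDeriv e (Deriv.trans d₁ d₂)
  | compat {a b t u : Tm} (s : Tm) (x : ℕ) {e : Deriv Ax a b} {d : Deriv Ax t u} :
      SubDeriv e d → SubDeriv e (Deriv.compat s x d)
  | subst {a b t u : Tm} (s : Tm) (x : ℕ) {e : Deriv Ax a b} {d : Deriv Ax t u} :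
      SubDeriv e d → SubDeriv e (Deriv.subst s x d)

/-!
Fresh variables are drawn from a counter above all variables of the given derivation, and three
transformations are applied, each at most quadratic in length. An Axiom application with instance
`A[σ]` becomes the injective renaming `A[ρ]` of `A` onto fresh variables `y₁, …, yₖ`, followed by
the Substitutions `[σ(xᵢ)/yᵢ]` one at a time. Bottom-up, every Substitution `[s/x]` is made to bind
a new variable `y` by renaming `x` to `y` in its (already transformed) premise derivation; as `y`
occurs in neither side of the premise, the conclusion does not change, and renaming preserves
length. Finally each remaining variable `x` that is neither bound nor in the conclusion is bound
by a vacuous Substitution `[x/x]`; there are at most `lh(𝒟)` of them, each costing `O(lh(𝒟))`.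
-/

namespace Tm

theorem lh_pos (t : Tm) : 0 < t.lh := by
  cases t <;> simp [Tm.lh]

theorem subst_eq_msubst (t : Tm) (x : ℕ) (s : Tm) :
    t.subst x s = t.msubst (fun y => if y = x then s else .var y) := by
  induction t with
  | app k a args ih => simp only [Tm.subst, Tm.msubst]; exact congrArg _ (funext ih)
  | _ => simp_all [Tm.subst, Tm.msubst]

theorem msubst_congr {σ τ : ℕ → Tm} (t : Tm) (h : ∀ x ∈ t.vars, σ x = τ x) :
    t.msubst σ = t.msubst τ := by
  induction t with
  | app k a args ih =>
    simp only [Tm.vars, Finset.mem_biUnion, Finset.mem_univ, true_and] at h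
    simp only [Tm.msubst]
    exact congrArg _ (funext fun i => ih i fun x hx => h x ⟨i, hx⟩)
  | _ => simp_all [Tm.vars, Tm.msubst]

theorem msubst_msubst (t : Tm) (σ τ : ℕ → Tm) :
    (t.msubst σ).msubst τ = t.msubst (fun x => (σ x).msubst τ) := by
  induction t with
  | app k a args ih => simp only [Tm.msubst]; exact congrArg _ (funext ih)
  | _ => simp_all [Tm.msubst]

theorem msubst_var (t : Tm) : t.msubst Tm.var = t := by
  induction t with
  | app k a args ih => simp only [Tm.msubst]; exact congrArg _ (funext ih)
  | _ => simp_all [Tm.msubst]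

theorem vars_msubst (t : Tm) (σ : ℕ → Tm) :
    (t.msubst σ).vars = t.vars.biUnion fun x => (σ x).vars := by
  induction t with
  | app k a args ih =>
    simp only [Tm.msubst, Tm.vars, ih, Finset.biUnion_biUnion]
  | _ => simp_all [Tm.msubst, Tm.vars]

theorem vars_subset_vars_msubst {t : Tm} {x : ℕ} (h : x ∈ t.vars) (σ : ℕ → Tm) :
    (σ x).vars ⊆ (t.msubst σ).vars := by
  rw [vars_msubst]
  exact Finset.subset_biUnion_of_mem (fun y => (σ y).vars) h

theorem vars_subst_subset (t : Tm) (x : ℕ) (s : Tm) :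
    (t.subst x s).vars ⊆ t.vars ∪ s.vars := by
  rw [subst_eq_msubst, vars_msubst]
  refine Finset.biUnion_subset.2 fun y hy => ?_
  split_ifs
  · exact Finset.subset_union_right
  · simp [Tm.vars, hy]

theorem lh_msubst_le_lh_msubst {σ τ : ℕ → Tm} (t : Tm)
    (h : ∀ x ∈ t.vars, (σ x).lh ≤ (τ x).lh) : (t.msubst σ).lh ≤ (t.msubst τ).lh := by
  induction t with
  | app k a args ih =>
    simp only [Tm.vars, Finset.mem_biUnion, Finset.mem_univ, true_and] at h
    simp only [Tm.msubst, Tm.lh, add_le_add_iff_right]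
    exact Finset.sum_le_sum fun i _ => ih i fun x hx => h x ⟨i, hx⟩
  | _ => simp_all [Tm.vars, Tm.msubst, Tm.lh]

theorem lh_le_lh_msubst (t : Tm) (σ : ℕ → Tm) : t.lh ≤ (t.msubst σ).lh := by
  conv_lhs => rw [← msubst_var t]
  exact lh_msubst_le_lh_msubst t fun x _ => (σ x).lh_pos

theorem lh_le_lh_msubst_of_mem {t : Tm} {x : ℕ} (h : x ∈ t.vars) (σ : ℕ → Tm) :
    (σ x).lh ≤ (t.msubst σ).lh := by
  induction t with
  | app k a args ih =>
    simp only [Tm.vars, Finset.mem_biUnion, Finset.mem_univ, true_and] at h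
    obtain ⟨i, hi⟩ := h
    simp only [Tm.msubst, Tm.lh]
    exact (ih i hi).trans ((Finset.single_le_sum (f := fun j => ((args j).msubst σ).lh)
      (fun j _ => Nat.zero_le _) (Finset.mem_univ i)).trans (Nat.le_succ _))
  | _ => simp_all [Tm.vars, Tm.msubst, Tm.lh]; try omega

theorem card_vars_le_lh (t : Tm) : t.vars.card ≤ t.lh := by
  induction t with
  | app k a args ih =>
    simp only [Tm.vars, Tm.lh]
    exact Finset.card_biUnion_le.trans ((Finset.sum_le_sum fun i _ => ih i).trans (Nat.le_succ _))
  | _ => simp_all [Tm.vars, Tm.lh]; try omega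

theorem subst_eq_self_of_notMem {t : Tm} {x : ℕ} (h : x ∉ t.vars) (s : Tm) :
    t.subst x s = t := by
  rw [subst_eq_msubst, msubst_congr t (τ := Tm.var) fun y hy => if_neg (ne_of_mem_of_not_mem hy h),
    msubst_var]

theorem subst_var_self (t : Tm) (x : ℕ) : t.subst x (.var x) = t := by
  rw [subst_eq_msubst, msubst_congr t (τ := Tm.var) fun y _ => by split_ifs <;> simp_all,
    msubst_var]

theorem lh_rename (π : ℕ → ℕ) (t : Tm) : (t.msubst (Tm.var ∘ π)).lh = t.lh := by
  refine le_antisymm ?_ (lh_le_lh_msubst t _)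
  conv_rhs => rw [← msubst_var t]
  exact lh_msubst_le_lh_msubst t fun _ _ => le_rfl

theorem vars_rename (π : ℕ → ℕ) (t : Tm) :
    (t.msubst (Tm.var ∘ π)).vars = t.vars.image π := by
  ext v
  simp [vars_msubst, Tm.vars, eq_comm]

theorem rename_subst {π : ℕ → ℕ} (hπ : Function.Injective π) (t s : Tm) (x : ℕ) :
    (t.subst x s).msubst (Tm.var ∘ π)
      = (t.msubst (Tm.var ∘ π)).subst (π x) (s.msubst (Tm.var ∘ π)) := by
  rw [subst_eq_msubst, subst_eq_msubst, msubst_msubst, msubst_msubst]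
  refine msubst_congr t fun z _ => ?_
  by_cases h : z = x
  · simp [h, Tm.msubst]
  · simp [h, hπ.ne h, Tm.msubst]

theorem swap_subst {t : Tm} (s : Tm) {x y : ℕ} (hy : y ∉ t.vars) :
    (t.msubst (Tm.var ∘ Equiv.swap x y)).subst y s = t.subst x s := by
  rw [subst_eq_msubst, subst_eq_msubst, msubst_msubst]
  refine msubst_congr t fun z hz => ?_
  have hzy : z ≠ y := ne_of_mem_of_not_mem hz hy
  by_cases hzx : z = x
  · simp [hzx, Tm.msubst]
  · simp [Equiv.swap_apply_of_ne_of_ne hzx hzy, Tm.msubst, hzx, hzy]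

end Tm

theorem add_le_mul_add_sq {k a a' b b' : ℕ} (ha : a' ≤ k * a ^ 2) (hb : b' ≤ k * b ^ 2) :
    a' + b' ≤ k * (a + b) ^ 2 :=
  calc a' + b' ≤ k * (a ^ 2 + b ^ 2) := by rw [mul_add]; exact add_le_add ha hb
    _ ≤ k * (a + b) ^ 2 := Nat.mul_le_mul_left k (by rw [add_sq]; omega)

theorem add_le_mul_add_sq_of_one_le {k a a' : ℕ} (hk : 1 ≤ k) (ha : a' ≤ k * a ^ 2) (c : ℕ) :
    a' + c ≤ k * (a + c) ^ 2 :=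
  add_le_mul_add_sq ha (le_mul_of_one_le_of_le hk (Nat.le_self_pow two_ne_zero c))

namespace Deriv

variable {Ax : Set Axm}

def dcast {t u t' u' : Tm} (h₁ : t = t') (h₂ : u = u') (d : Deriv Ax t u) : Deriv Ax t' u' :=
  h₁ ▸ h₂ ▸ d

section dcast

variable {t u t' u' : Tm} (h₁ : t = t') (h₂ : u = u') (d : Deriv Ax t u)

@[simp] theorem lh_dcast : (d.dcast h₁ h₂).lh = d.lh := by subst h₁ h₂; rfl

@[simp] theorem varsOf_dcast : (d.dcast h₁ h₂).varsOf = d.varsOf := by subst h₁ h₂; rfl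

@[simp] theorem bvars_dcast : (d.dcast h₁ h₂).bvars = d.bvars := by subst h₁ h₂; rfl

@[simp] theorem vnfAx_dcast : (d.dcast h₁ h₂).VNFax ↔ d.VNFax := by subst h₁ h₂; rfl

end dcast

theorem vars_union_vars_subset_varsOf : {a b : Tm} → (d : Deriv Ax a b) →
    a.vars ∪ b.vars ⊆ d.varsOf
  | _, _, .ax _ _ _ | _, _, .refl _ => by simp [varsOf]
  | _, _, .symm d => by
    simpa [varsOf, Finset.union_comm] using vars_union_vars_subset_varsOf d
  | _, _, .trans d₁ d₂ => by
    have h₁ := vars_union_vars_subset_varsOf d₁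
    have h₂ := vars_union_vars_subset_varsOf d₂
    simp only [varsOf, Finset.union_subset_iff] at h₁ h₂ ⊢
    exact ⟨h₁.1.trans Finset.subset_union_left, h₂.2.trans Finset.subset_union_right⟩
  | _, _, .compat s x d | _, _, .subst s x d => by
    have h := vars_union_vars_subset_varsOf d
    simp only [varsOf, Finset.union_subset_iff] at h ⊢
    constructor <;> refine (Tm.vars_subst_subset _ _ _).trans ?_ <;> grind

theorem lh_add_lh_lt_lh {a b : Tm} (d : Deriv Ax a b) : a.lh + b.lh < d.lh := by
  cases d <;> simp only [lh] <;> omega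

theorem card_varsOf_le_lh : {a b : Tm} → (d : Deriv Ax a b) → d.varsOf.card ≤ d.lh
  | _, _, .ax A _ σ => by
    have := Finset.card_union_le (A.lhs.msubst σ).vars (A.rhs.msubst σ).vars
    have := (A.lhs.msubst σ).card_vars_le_lh
    have := (A.rhs.msubst σ).card_vars_le_lh
    simp only [varsOf, lh]
    omega
  | _, _, .refl t => by
    have := t.card_vars_le_lh
    simp only [varsOf, lh]
    omega
  | _, _, .symm d => by
    have := card_varsOf_le_lh d
    simp only [varsOf, lh]
    omega
  | _, _, .trans d₁ d₂ => by
    have := Finset.card_union_le d₁.varsOf d₂.varsOf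
    have := card_varsOf_le_lh d₁
    have := card_varsOf_le_lh d₂
    simp only [varsOf, lh]
    omega
  | _, _, .compat s x d | _, _, .subst s x d => by
    have := Finset.card_union_le (d.varsOf ∪ s.vars) {x}
    have := Finset.card_union_le d.varsOf s.vars
    have := card_varsOf_le_lh d
    have := s.card_vars_le_lh
    simp only [varsOf, lh, Finset.card_singleton] at *
    omega

theorem InjRenaming.rename {A : Axm} {σ : ℕ → Tm} (h : InjRenaming A σ) {π : ℕ → ℕ}
    (hπ : Function.Injective π) : InjRenaming A fun x => (σ x).msubst (Tm.var ∘ π) := by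
  refine ⟨fun x hx => ?_, fun x₁ h₁ x₂ h₂ he => h.2 h₁ h₂ ?_⟩
  · obtain ⟨y, hy⟩ := h.1 x hx
    exact ⟨π y, by simp [hy, Tm.msubst]⟩
  · obtain ⟨y₁, hy₁⟩ := h.1 x₁ h₁
    obtain ⟨y₂, hy₂⟩ := h.1 x₂ h₂
    simp only [hy₁, hy₂, Tm.msubst, Function.comp_apply, Tm.var.injEq] at he
    rw [hy₁, hy₂, hπ he]

theorem exists_rename {π : ℕ → ℕ} (hπ : Function.Injective π) : {a b : Tm} → (d : Deriv Ax a b) →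
    ∃ d' : Deriv Ax (a.msubst (Tm.var ∘ π)) (b.msubst (Tm.var ∘ π)),
      d'.lh = d.lh ∧ d'.bvars = d.bvars.map π ∧ d'.varsOf = d.varsOf.image π ∧
      (d.VNFax → d'.VNFax)
  | _, _, .ax A hA σ => by
    have e₁ := Tm.msubst_msubst A.lhs σ (Tm.var ∘ π)
    have e₂ := Tm.msubst_msubst A.rhs σ (Tm.var ∘ π)
    refine ⟨dcast e₁.symm e₂.symm (.ax A hA _), ?_, ?_, ?_, fun h => ?_⟩
    · simp [lh, ← e₁, ← e₂, Tm.lh_rename]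
    · simp [bvars]
    · simp [varsOf, ← e₁, ← e₂, Tm.vars_rename, Finset.image_union]
    · exact (vnfAx_dcast _ _ _).2 (InjRenaming.rename h hπ)
  | _, _, .refl t =>
    ⟨.refl _, by simp [lh, bvars, varsOf, Tm.lh_rename, Tm.vars_rename, VNFax]⟩
  | _, _, .symm d => by
    obtain ⟨r, h₁, h₂, h₃, h₄⟩ := exists_rename hπ d
    exact ⟨.symm r, by simp [lh, h₁, Tm.lh_rename], h₂, h₃, h₄⟩
  | _, _, .trans d₁ d₂ => by
    obtain ⟨r₁, h₁, h₂, h₃, h₄⟩ := exists_rename hπ d₁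
    obtain ⟨r₂, g₁, g₂, g₃, g₄⟩ := exists_rename hπ d₂
    exact ⟨.trans r₁ r₂, by simp [lh, h₁, g₁, Tm.lh_rename], by simp [bvars, h₂, g₂],
      by simp [varsOf, h₃, g₃, Finset.image_union], fun h => ⟨h₄ h.1, g₄ h.2⟩⟩
  | _, _, @Deriv.compat _ t u s x d => by
    obtain ⟨r, h₁, h₂, h₃, h₄⟩ := exists_rename hπ d
    have e₁ := Tm.rename_subst hπ s t x
    have e₂ := Tm.rename_subst hπ s u x
    refine ⟨dcast e₁.symm e₂.symm (.compat _ (π x) r), ?_, by simpa [bvars] using h₂, ?_,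
      fun h => (vnfAx_dcast _ _ _).2 (h₄ h)⟩
    · simp only [lh_dcast, lh, h₁, ← e₁, ← e₂, Tm.lh_rename]
    · simp [varsOf, h₃, Tm.vars_rename, Finset.image_union]
  | _, _, @Deriv.subst _ t u s x d => by
    obtain ⟨r, h₁, h₂, h₃, h₄⟩ := exists_rename hπ d
    have e₁ := Tm.rename_subst hπ t s x
    have e₂ := Tm.rename_subst hπ u s x
    refine ⟨dcast e₁.symm e₂.symm (.subst _ (π x) r), ?_, by simp [bvars, h₂], ?_,
      fun h => (vnfAx_dcast _ _ _).2 (h₄ h)⟩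
    · simp only [lh_dcast, lh, h₁, ← e₁, ← e₂, Tm.lh_rename]
    · simp [varsOf, h₃, Tm.vars_rename, Finset.image_union]

end Deriv

namespace Axm

theorem vars_eq (A : Axm) : A.vars = A.lhs.vars ∪ A.rhs.vars := by
  have : A.lhs.vars = A.lhsVars := by
    simp only [Axm.lhs, Tm.vars, Axm.lhsVars]
    congr 1
    funext i
    cases A.args i <;> rfl
  rw [this, Axm.vars]

theorem lhs_vars_subset (A : Axm) : A.lhs.vars ⊆ A.vars := A.vars_eq ▸ Finset.subset_union_left

theorem rhs_vars_subset (A : Axm) : A.rhs.vars ⊆ A.vars := Finset.subset_union_right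

noncomputable def freshVar (A : Axm) (N x : ℕ) : ℕ := N + A.vars.toList.idxOf x

theorem freshVar_injOn (A : Axm) (N : ℕ) : Set.InjOn (A.freshVar N) A.vars :=
  fun _ hx _ _ h => (List.idxOf_inj (Finset.mem_toList.2 hx)).1 (Nat.add_left_cancel h)

theorem freshVar_mem_Ico {A : Axm} {x : ℕ} (hx : x ∈ A.vars) (N : ℕ) :
    A.freshVar N x ∈ Finset.Ico N (N + A.vars.card) := by
  have := List.idxOf_lt_length_iff.2 (Finset.mem_toList.2 hx)
  rw [Finset.length_toList] at this
  simp only [freshVar, Finset.mem_Ico]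
  omega

/-- Interpolates between an injective renaming of `A` (`p = []`) and the instance of `A` under
`σ` (`p` listing all of `A.vars`). -/
noncomputable def partialInst (A : Axm) (σ : ℕ → Tm) (N : ℕ) (p : List ℕ) : ℕ → Tm :=
  fun x => if x ∈ p then σ x else .var (A.freshVar N x)

variable {A : Axm} {σ : ℕ → Tm} {N : ℕ}

theorem lh_msubst_partialInst_le (p : List ℕ) (w : Tm) :
    (w.msubst (A.partialInst σ N p)).lh ≤ (w.msubst σ).lh := by
  refine w.lh_msubst_le_lh_msubst fun z _ => ?_
  unfold partialInst
  split_ifs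
  · exact le_rfl
  · exact (σ z).lh_pos

theorem subst_freshVar_partialInst (hσ : ∀ z ∈ A.vars, (σ z).vars ⊆ Finset.range N) {w : Tm}
    (hw : w.vars ⊆ A.vars) {x : ℕ} (hxA : x ∈ A.vars) {p : List ℕ} (hxp : x ∉ p) :
    (w.msubst (A.partialInst σ N p)).subst (A.freshVar N x) (σ x)
      = w.msubst (A.partialInst σ N (x :: p)) := by
  rw [Tm.subst_eq_msubst, Tm.msubst_msubst]
  refine w.msubst_congr fun z hz => ?_
  have hzA := hw hz
  by_cases hzp : z ∈ p
  · have hfresh : A.freshVar N x ∉ (σ z).vars := fun h => by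
      simpa [freshVar] using hσ z hzA h
    simp only [partialInst, hzp, if_true, List.mem_cons, or_true]
    rw [← Tm.subst_eq_msubst, Tm.subst_eq_self_of_notMem hfresh]
  · by_cases hzx : z = x
    · subst hzx
      simp [partialInst, hzp, Tm.msubst]
    · have hne : A.freshVar N z ≠ A.freshVar N x := fun h => hzx (A.freshVar_injOn N hzA hxA h)
      simp [partialInst, hzp, hzx, hne, Tm.msubst]

end Axm

namespace Deriv

variable {Ax : Set Axm}

structure FreshlyBound {a b : Tm} (d : Deriv Ax a b) (V : Finset ℕ) (n n' : ℕ) : Prop where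
  vnfAx : d.VNFax
  le : n ≤ n'
  nodup : d.bvars.Nodup
  bvars_mem : ∀ x ∈ d.bvars, x ∈ Finset.Ico n n'
  varsOf_mem : ∀ x ∈ d.varsOf, x ∈ V ∨ x ∈ d.bvars

section AxiomBlock

variable {A : Axm} (hA : A ∈ Ax) {σ : ℕ → Tm} {N : ℕ}

theorem vnfAx_ax_partialInst_nil : (ax A hA (A.partialInst σ N [])).VNFax := by
  refine ⟨fun x _ => ⟨A.freshVar N x, by simp [Axm.partialInst]⟩, fun x hx y hy h => ?_⟩
  simp only [Axm.partialInst, List.not_mem_nil, if_false, Tm.var.injEq] at h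
  exact A.freshVar_injOn N hx hy h

theorem exists_partialInst (hσ : ∀ z ∈ A.vars, (σ z).vars ⊆ Finset.range N) :
    ∀ p : List ℕ, p.Nodup → (∀ x ∈ p, x ∈ A.vars) →
    ∃ d : Deriv Ax (A.lhs.msubst (A.partialInst σ N p)) (A.rhs.msubst (A.partialInst σ N p)),
      d.VNFax ∧ d.bvars = p.map (A.freshVar N) ∧
      d.varsOf ⊆ (ax A hA σ).varsOf ∪ A.vars.image (A.freshVar N) ∧
      d.lh ≤ (ax A hA σ).lh * (1 + 5 * p.length)
  | [], _, _ => by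
    refine ⟨.ax A hA _, vnfAx_ax_partialInst_nil hA, rfl, ?_, ?_⟩
    · have hren : ∀ w : Tm, w.vars ⊆ A.vars →
          (w.msubst (A.partialInst σ N [])).vars ⊆ A.vars.image (A.freshVar N) := by
        intro w hw v hv
        simp only [Tm.vars_msubst, Finset.mem_biUnion, Axm.partialInst, List.not_mem_nil,
          if_false, Tm.vars, Finset.mem_singleton] at hv
        obtain ⟨z, hz, rfl⟩ := hv
        exact Finset.mem_image_of_mem _ (hw hz)
      exact Finset.union_subset (hren _ A.lhs_vars_subset) (hren _ A.rhs_vars_subset) |>.trans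
        Finset.subset_union_right
    · have := A.lh_msubst_partialInst_le (σ := σ) (N := N) [] A.lhs
      have := A.lh_msubst_partialInst_le (σ := σ) (N := N) [] A.rhs
      simp only [lh, List.length_nil]
      omega
  | x :: p, hnd, hmem => by
    have hxp : x ∉ p := (List.nodup_cons.1 hnd).1
    have hxA : x ∈ A.vars := hmem x List.mem_cons_self
    obtain ⟨d, hvnf, hbv, hvo, hlh⟩ := exists_partialInst hσ p (List.nodup_cons.1 hnd).2
      fun z hz => hmem z (List.mem_cons_of_mem _ hz)
    have e₁ := Axm.subst_freshVar_partialInst hσ A.lhs_vars_subset hxA hxp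
    have e₂ := Axm.subst_freshVar_partialInst hσ A.rhs_vars_subset hxA hxp
    have hσx : (σ x).vars ⊆ (ax A hA σ).varsOf := by
      rcases Finset.mem_union.1 (A.vars_eq ▸ hxA) with h | h
      · exact (Tm.vars_subset_vars_msubst h σ).trans Finset.subset_union_left
      · exact (Tm.vars_subset_vars_msubst h σ).trans Finset.subset_union_right
    refine ⟨dcast e₁ e₂ (.subst (σ x) (A.freshVar N x) d), (vnfAx_dcast _ _ _).2 hvnf,
      by simp [bvars, hbv], ?_, ?_⟩
    · simp only [varsOf_dcast, varsOf, Finset.union_subset_iff, Finset.singleton_subset_iff]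
      exact ⟨⟨hvo, hσx.trans Finset.subset_union_left⟩,
        Finset.mem_union_right _ (Finset.mem_image_of_mem _ hxA)⟩
    · have lσx : (σ x).lh ≤ (A.lhs.msubst σ).lh + (A.rhs.msubst σ).lh := by
        rcases Finset.mem_union.1 (A.vars_eq ▸ hxA) with h | h
        · exact (Tm.lh_le_lh_msubst_of_mem h σ).trans (Nat.le_add_right _ _)
        · exact (Tm.lh_le_lh_msubst_of_mem h σ).trans (Nat.le_add_left _ _)
      have l₁ := A.lh_msubst_partialInst_le (σ := σ) (N := N) p A.lhs
      have l₂ := A.lh_msubst_partialInst_le (σ := σ) (N := N) p A.rhs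
      have l₃ := A.lh_msubst_partialInst_le (σ := σ) (N := N) (x :: p) A.lhs
      have l₄ := A.lh_msubst_partialInst_le (σ := σ) (N := N) (x :: p) A.rhs
      simp only [lh_dcast, lh, e₁, e₂, List.length_cons] at hlh ⊢
      nlinarith

theorem exists_freshlyBound_ax (σ : ℕ → Tm) (hN : (ax A hA σ).varsOf ⊆ Finset.range N) :
    ∃ d : Deriv Ax (A.lhs.msubst σ) (A.rhs.msubst σ),
      d.FreshlyBound (ax A hA σ).varsOf N (N + A.vars.card) ∧ d.lh ≤ 5 * (ax A hA σ).lh ^ 2 := by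
  have hσ : ∀ z ∈ A.vars, (σ z).vars ⊆ Finset.range N := fun z hz => by
    refine hN.trans' ?_
    rcases Finset.mem_union.1 (A.vars_eq ▸ hz) with h | h
    · exact (Tm.vars_subset_vars_msubst h σ).trans Finset.subset_union_left
    · exact (Tm.vars_subset_vars_msubst h σ).trans Finset.subset_union_right
  obtain ⟨d, hvnf, hbv, hvo, hlh⟩ := exists_partialInst hA hσ A.vars.toList
    (Finset.nodup_toList _) fun z hz => Finset.mem_toList.1 hz
  have hinst : ∀ w : Tm, w.vars ⊆ A.vars →
      w.msubst (A.partialInst σ N A.vars.toList) = w.msubst σ := fun w hw =>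
    w.msubst_congr fun z hz => if_pos (Finset.mem_toList.2 (hw hz))
  have hbv' : ∀ v, v ∈ d.bvars ↔ v ∈ A.vars.image (A.freshVar N) := by
    simp [hbv]
  refine ⟨dcast (hinst _ A.lhs_vars_subset) (hinst _ A.rhs_vars_subset) d, ⟨?_, ?_, ?_, ?_, ?_⟩, ?_⟩
  · exact (vnfAx_dcast _ _ _).2 hvnf
  · exact Nat.le_add_right _ _
  · rw [bvars_dcast, hbv]
    exact (Finset.nodup_toList _).map_on fun x hx y hy h =>
      A.freshVar_injOn N (Finset.mem_toList.1 hx) (Finset.mem_toList.1 hy) h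
  · intro v hv
    obtain ⟨x, hx, rfl⟩ := Finset.mem_image.1 ((hbv' v).1 (by simpa using hv))
    exact Axm.freshVar_mem_Ico hx N
  · intro v hv
    rw [bvars_dcast, hbv' v]
    simpa using hvo (by simpa using hv)
  · have hcard : A.vars.card ≤ (A.lhs.msubst σ).lh + (A.rhs.msubst σ).lh := by
      have := Finset.card_union_le A.lhs.vars A.rhs.vars
      have := A.lhs.card_vars_le_lh
      have := A.rhs.card_vars_le_lh
      have := A.lhs.lh_le_lh_msubst σ
      have := A.rhs.lh_le_lh_msubst σ
      rw [A.vars_eq]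
      omega
    rw [Finset.length_toList] at hlh
    simp only [lh_dcast, lh] at hlh ⊢
    nlinarith

end AxiomBlock

variable {V V' : Finset ℕ} {n n' n'' : ℕ}

theorem freshlyBound_refl (t : Tm) (n : ℕ) : (refl t : Deriv Ax t t).FreshlyBound t.vars n n :=
  ⟨trivial, le_rfl, List.nodup_nil, by simp [bvars], fun _ hx => Or.inl hx⟩

theorem FreshlyBound.symm {t u : Tm} {d : Deriv Ax u t} (h : d.FreshlyBound V n n') :
    (symm d).FreshlyBound V n n' :=
  ⟨h.vnfAx, h.le, h.nodup, h.bvars_mem, h.varsOf_mem⟩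

theorem FreshlyBound.trans {t s u : Tm} {d₁ : Deriv Ax t s} {d₂ : Deriv Ax s u}
    (h₁ : d₁.FreshlyBound V n n') (h₂ : d₂.FreshlyBound V' n' n'') :
    (trans d₁ d₂).FreshlyBound (V ∪ V') n n'' := by
  have hb₁ := h₁.bvars_mem
  have hb₂ := h₂.bvars_mem
  have hv₁ := h₁.varsOf_mem
  have hv₂ := h₂.varsOf_mem
  simp only [Finset.mem_Ico] at hb₁ hb₂
  refine ⟨⟨h₁.vnfAx, h₂.vnfAx⟩, h₁.le.trans h₂.le, ?_, ?_, ?_⟩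
  · refine h₁.nodup.append h₂.nodup fun x hx₁ hx₂ => ?_
    have := hb₁ x hx₁
    have := hb₂ x hx₂
    omega
  · intro x hx
    simp only [bvars, List.mem_append, Finset.mem_Ico] at hx ⊢
    have := h₁.le
    have := h₂.le
    rcases hx with hx | hx
    · have := hb₁ x hx; omega
    · have := hb₂ x hx; omega
  · intro x hx
    simp only [varsOf, bvars, Finset.mem_union, List.mem_append] at hx ⊢
    rcases hx with hx | hx
    · rcases hv₁ x hx with h | h <;> simp [h]
    · rcases hv₂ x hx with h | h <;> simp [h]

theorem FreshlyBound.compat {t u : Tm} {d : Deriv Ax t u} (h : d.FreshlyBound V n n')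
    (s : Tm) (x : ℕ) : (compat s x d).FreshlyBound (V ∪ s.vars ∪ {x}) n n' := by
  refine ⟨h.vnfAx, h.le, h.nodup, h.bvars_mem, fun y hy => ?_⟩
  simp only [varsOf, Finset.mem_union] at hy ⊢
  rcases hy with (hy | hy) | hy
  · rcases h.varsOf_mem y hy with h | h <;> simp [h, bvars]
  · simp [hy]
  · simp [hy]

theorem FreshlyBound.exists_subst {t u : Tm} {d : Deriv Ax t u} (h : d.FreshlyBound V n n')
    (hV : V ⊆ Finset.range n) (ht : t.vars ⊆ V) (hu : u.vars ⊆ V) (s : Tm) {x : ℕ}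
    (hx : x < n) :
    ∃ d' : Deriv Ax (t.subst x s) (u.subst x s),
      d'.FreshlyBound (V ∪ s.vars ∪ {x}) n (n' + 1) ∧ d'.lh = (subst s x d).lh := by
  have hV' : ∀ v ∈ V, v < n' := fun v hv => (Finset.mem_range.1 (hV hv)).trans_le h.le
  have hb : ∀ y ∈ d.bvars, n ≤ y ∧ y < n' := fun y hy => Finset.mem_Ico.1 (h.bvars_mem y hy)
  have hswap : ∀ y ∈ d.bvars, Equiv.swap x n' y = y := fun y hy =>
    Equiv.swap_apply_of_ne_of_ne (by have := hb y hy; omega) (by have := hb y hy; omega)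
  have hnt : n' ∉ t.vars := fun h => (hV' n' (ht h)).false
  have hnu : n' ∉ u.vars := fun h => (hV' n' (hu h)).false
  obtain ⟨r, hlh, hbv, hvo, hvnf⟩ := exists_rename (Equiv.swap x n').injective d
  rw [List.map_congr_left hswap, List.map_id'] at hbv
  refine ⟨dcast (Tm.swap_subst s hnt) (Tm.swap_subst s hnu) (.subst s n' r),
    ⟨(vnfAx_dcast _ _ _).2 (hvnf h.vnfAx), by have := h.le; omega, ?_, ?_, ?_⟩, ?_⟩
  · simp only [bvars_dcast, bvars, hbv, List.nodup_cons]
    exact ⟨fun hn => (hb n' hn).2.false, h.nodup⟩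
  · simp only [bvars_dcast, bvars, hbv, List.mem_cons, Finset.mem_Ico]
    rintro y (rfl | hy)
    · have := h.le; omega
    · have := hb y hy; omega
  · simp only [varsOf_dcast, varsOf, hvo, bvars_dcast, bvars, hbv, Finset.mem_union,
      Finset.mem_image, Finset.mem_singleton, List.mem_cons]
    rintro y ((⟨y, hy, rfl⟩ | hy) | rfl)
    · rcases h.varsOf_mem y hy with hyV | hyb
      · by_cases hyx : y = x
        · simp [hyx]
        · have := hV' y hyV
          simp [Equiv.swap_apply_of_ne_of_ne hyx this.ne, hyV]
      · simp [hswap y hyb, hyb]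
    · simp [hy]
    · simp
  · rw [lh_dcast]
    simp only [lh, hlh, Tm.swap_subst s hnt, Tm.swap_subst s hnu, Tm.lh_rename]

theorem exists_freshlyBound : {a b : Tm} → (d : Deriv Ax a b) → (n : ℕ) →
    d.varsOf ⊆ Finset.range n →
    ∃ n', ∃ d' : Deriv Ax a b, d'.FreshlyBound d.varsOf n n' ∧ d'.lh ≤ 5 * d.lh ^ 2
  | _, _, .ax A hA σ, n, hn =>
    let ⟨d', h, hlh⟩ := exists_freshlyBound_ax hA σ hn
    ⟨_, d', h, hlh⟩
  | _, _, .refl t, n, _ => ⟨n, .refl t, freshlyBound_refl t n, by simp only [lh]; nlinarith⟩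
  | _, _, .symm d, n, hn => by
    obtain ⟨n', d', h, hlh⟩ := exists_freshlyBound d n hn
    exact ⟨n', .symm d', h.symm, add_le_mul_add_sq_of_one_le (by norm_num) hlh _⟩
  | _, _, .trans d₁ d₂, n, hn => by
    obtain ⟨n₁, d₁', h₁, hlh₁⟩ := exists_freshlyBound d₁ n (Finset.subset_union_left.trans hn)
    obtain ⟨n₂, d₂', h₂, hlh₂⟩ := exists_freshlyBound d₂ n₁
      (Finset.subset_union_right.trans (hn.trans (Finset.range_subset_range.2 h₁.le)))
    exact ⟨n₂, .trans d₁' d₂', h₁.trans h₂,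
      add_le_mul_add_sq_of_one_le (by norm_num) (add_le_mul_add_sq hlh₁ hlh₂) _⟩
  | _, _, .compat s x d, n, hn => by
    obtain ⟨n', d', h, hlh⟩ := exists_freshlyBound d n
      ((Finset.subset_union_left.trans Finset.subset_union_left).trans hn)
    exact ⟨n', .compat s x d', h.compat s x, by
      simpa only [lh, add_assoc] using add_le_mul_add_sq_of_one_le (by norm_num) hlh _⟩
  | _, _, .subst s x d, n, hn => by
    have hd : d.varsOf ⊆ Finset.range n :=
      (Finset.subset_union_left.trans Finset.subset_union_left).trans hn
    obtain ⟨n', d', h, hlh⟩ := exists_freshlyBound d n hd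
    have htu := vars_union_vars_subset_varsOf d
    obtain ⟨d'', h', hlh'⟩ := h.exists_subst hd (Finset.subset_union_left.trans htu)
      (Finset.subset_union_right.trans htu) s
      (Finset.mem_range.1 (hn (Finset.mem_union_right _ (Finset.mem_singleton_self x))))
    exact ⟨n' + 1, d'', h', by
      simpa only [hlh', lh, add_assoc] using add_le_mul_add_sq_of_one_le (by norm_num) hlh _⟩

theorem exists_bind_vacuous {t u : Tm} (d : Deriv Ax t u) : ∀ l : List ℕ, ∃ d' : Deriv Ax t u,
    (d'.VNFax ↔ d.VNFax) ∧ d'.bvars = l ++ d.bvars ∧ d'.varsOf = d.varsOf ∪ l.toFinset ∧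
    d'.lh = d.lh + l.length * (2 * (t.lh + u.lh) + 7)
  | [] => ⟨d, Iff.rfl, rfl, by simp, by simp⟩
  | x :: l => by
    obtain ⟨d', h₁, h₂, h₃, h₄⟩ := exists_bind_vacuous d l
    refine ⟨dcast (t.subst_var_self x) (u.subst_var_self x) (.subst (.var x) x d'),
      by simpa [VNFax] using h₁, by simp [bvars, h₂], ?_, ?_⟩
    · ext v
      simp only [varsOf_dcast, varsOf, h₃, Tm.vars, Finset.mem_union, Finset.mem_singleton,
        List.mem_toFinset, List.mem_cons]
      tauto
    · simp only [lh_dcast, lh, Tm.subst_var_self, h₄, Tm.lh, List.length_cons]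
      ring

theorem FreshlyBound.exists_vnf {t u : Tm} {d : Deriv Ax t u}
    (h : d.FreshlyBound V n n') :
    ∃ d' : Deriv Ax t u, d'.VNF ∧ d'.lh ≤ d.lh + V.card * (2 * (t.lh + u.lh) + 7) := by
  classical
  set S := d.varsOf \ (t.vars ∪ u.vars ∪ d.bvars.toFinset) with hS
  have hSV : S ⊆ V := fun x hx => by
    simp only [hS, Finset.mem_sdiff, Finset.mem_union, List.mem_toFinset, not_or] at hx
    exact (h.varsOf_mem x hx.1).resolve_right hx.2.2
  obtain ⟨d', h₁, h₂, h₃, h₄⟩ := d.exists_bind_vacuous S.toList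
  refine ⟨d', ⟨h₁.2 h.vnfAx, fun x hx => ?_⟩, ?_⟩
  · rw [h₃, Finset.mem_union, List.mem_toFinset, Finset.mem_toList] at hx
    have hxd : x ∈ d.varsOf := hx.elim id fun hxS => (Finset.mem_sdiff.1 hxS).1
    by_cases htu : x ∈ t.vars ∪ u.vars
    · exact Or.inl htu
    right
    rw [h₂, List.count_append]
    by_cases hb : x ∈ d.bvars
    · have hxS : x ∉ S := by simp [hS, hb]
      rw [List.count_eq_zero_of_not_mem (by simpa using hxS), List.count_eq_one_of_mem h.nodup hb]
    · have hxS : x ∈ S := Finset.mem_sdiff.2 ⟨hxd, by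
        simp only [Finset.mem_union, List.mem_toFinset] at htu ⊢
        tauto⟩
      rw [List.count_eq_one_of_mem S.nodup_toList (Finset.mem_toList.2 hxS),
        List.count_eq_zero_of_not_mem hb]
  · rw [h₄, Finset.length_toList]
    gcongr

end Deriv

/-- Variable Normal Form: there is a constant `C` such that
every `PETS(Ax)` derivation `d` of `t = u` can be transformed into a
derivation `d'` of `t = u` in Variable Normal Form with
`lh(d') ≤ C · lh(d)²`. -/
theorem vnf_exists :
    ∃ C : ℕ, ∀ (Ax : Set Axm), NiceAxioms Ax → ∀ {t u : Tm} (d : Deriv Ax t u),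
      ∃ d' : Deriv Ax t u, d'.VNF ∧ d'.lh ≤ C * d.lh ^ 2 := by
  refine ⟨14, fun Ax _ t u d => ?_⟩
  obtain ⟨n, hn⟩ := d.varsOf.exists_nat_subset_range
  obtain ⟨n', d₁, hd₁, hlh₁⟩ := d.exists_freshlyBound n hn
  obtain ⟨d₂, hvnf, hlh₂⟩ := hd₁.exists_vnf
  have hV := d.card_varsOf_le_lh
  have htu := d.lh_add_lh_lt_lh
  refine ⟨d₂, hvnf, hlh₂.trans ?_⟩
  calc d₁.lh + d.varsOf.card * (2 * (t.lh + u.lh) + 7)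
      ≤ 5 * d.lh ^ 2 + d.lh * (9 * d.lh) := by gcongr; omega
    _ = 14 * d.lh ^ 2 := by ring

end PETS
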